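/- Let m ≥ 1 be an odd integer and z a complex number with T_m(z) = 2 and z ≠ 2. Then S_{m−1}(z) = 0 and S_m(z) = 1, where S and T denote the Chebyshev polynomials of the second and first kind respectively. -/

import Mathlib

noncomputable def S : ℕ → ℂ → ℂ
  | 0 => fun _ => 1
  | 1 => fun q => q
  | (n + 2) => fun q => q * S (n + 1) q - S n q

noncomputable def T : ℕ → ℂ → ℂ
  | 0 => fun _ => 2
  | 1 => fun q => q
  | (n + 2) => fun q => q * T (n + 1) q - T n q

/-!
Write `z = w + v` with `w v = 1`. Then `T_m(z) = wᵐ + vᵐ` and `S_n(z) (w - v) = wⁿ⁺¹ - vⁿ⁺¹`.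
From `wᵐ + vᵐ = 2` and `wᵐ vᵐ = 1` we get `(wᵐ - vᵐ)² = 0`, so `wᵐ = vᵐ = 1`. Since `m` is odd
and `z ≠ 2`, `w ≠ v`, and dividing by `w - v` gives `S_{m-1}(z) = 0` and `S_m(z) = 1`.
-/

theorem exists_mul_eq_one_add_eq (z : ℂ) : ∃ w v : ℂ, w * v = 1 ∧ w + v = z := by
  obtain ⟨s, hs⟩ := IsAlgClosed.exists_pow_nat_eq (z ^ 2 - 4) two_pos
  refine ⟨(z + s) / 2, (z - s) / 2, ?_, by ring⟩
  linear_combination -hs / 4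

section
variable {w v : ℂ}

theorem T_add_of_mul_eq_one (h : w * v = 1) (n : ℕ) : T n (w + v) = w ^ n + v ^ n := by
  induction n using Nat.twoStepInduction with
  | zero => norm_num [T]
  | one => simp [T]
  | more n ih₀ ih₁ =>
    change (w + v) * T (n + 1) (w + v) - T n (w + v) = _
    rw [ih₀, ih₁]
    linear_combination (w ^ n + v ^ n) * h

theorem S_add_mul_sub_of_mul_eq_one (h : w * v = 1) (n : ℕ) :
    S n (w + v) * (w - v) = w ^ (n + 1) - v ^ (n + 1) := by
  induction n using Nat.twoStepInduction with
  | zero => simp [S]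
  | one => simp [S]; ring
  | more n ih₀ ih₁ =>
    change ((w + v) * S (n + 1) (w + v) - S n (w + v)) * (w - v) = _
    linear_combination (w + v) * ih₁ - ih₀ + (w ^ (n + 1) - v ^ (n + 1)) * h

theorem pow_eq_one_of_mul_eq_one_of_pow_add_pow_eq_two {m : ℕ} (h : w * v = 1)
    (hm : w ^ m + v ^ m = 2) : w ^ m = 1 ∧ v ^ m = 1 := by
  have hprod : w ^ m * v ^ m = 1 := by rw [← mul_pow, h, one_pow]
  have hsq : (w ^ m - v ^ m) ^ 2 = 0 := by
    linear_combination (w ^ m + v ^ m + 2) * hm - 4 * hprod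
  have hwv : w ^ m = v ^ m := sub_eq_zero.mp (pow_eq_zero_iff two_ne_zero |>.mp hsq)
  exact ⟨by linear_combination hm / 2 + hwv / 2, by linear_combination hm / 2 - hwv / 2⟩

theorem ne_of_mul_eq_one_of_add_ne_two {m : ℕ} (hmo : Odd m) (h : w * v = 1) (hw : w ^ m = 1)
    (hz : w + v ≠ 2) : w ≠ v := by
  rintro rfl
  rcases mul_self_eq_one_iff.mp h with rfl | rfl
  · norm_num at hz
  · rw [hmo.neg_one_pow] at hw
    norm_num at hw

end

theorem stmt_19_general (m : ℕ) (hmo : Odd m) (z : ℂ)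
    (hT : T m z = 2) (hz : z ≠ 2) :
    S (m - 1) z = 0 ∧ S m z = 1 := by
  obtain ⟨w, v, hwv, rfl⟩ := exists_mul_eq_one_add_eq z
  obtain ⟨hw, hv⟩ := pow_eq_one_of_mul_eq_one_of_pow_add_pow_eq_two hwv
    (T_add_of_mul_eq_one hwv m ▸ hT)
  have hne : w - v ≠ 0 := sub_ne_zero.mpr (ne_of_mul_eq_one_of_add_ne_two hmo hwv hw hz)
  have hm : m - 1 + 1 = m := Nat.sub_add_cancel hmo.pos
  constructor
  · have h := S_add_mul_sub_of_mul_eq_one hwv (m - 1)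
    rw [hm, hw, hv, sub_self] at h
    exact (mul_eq_zero.mp h).resolve_right hne
  · have h := S_add_mul_sub_of_mul_eq_one hwv m
    rw [pow_succ, pow_succ, hw, hv, one_mul, one_mul] at h
    exact mul_right_cancel₀ hne (h.trans (one_mul _).symm)

theorem stmt_19 (m : ℕ) (hm1 : 1 ≤ m) (hmo : Odd m) (z : ℂ)
    (hT : T m z = 2) (hz : z ≠ 2) :
    S (m - 1) z = 0 ∧ S m z = 1 :=
  stmt_19_general m hmo z hT hz
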